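/- Let x be an element of its ultra summit set with nonzero canonical length, and let u, v ∈ M with u ∧ v = 1. If x^u ∈ U_x and x^v ∈ U_x, then x ∈ U_x. -/

import Mathlib

namespace GarsideFormal

variable (G : Type*) [Group G]

/-- An atom of the submonoid `M`: a nontrivial element admitting no nontrivial
factorization inside `M`. -/
def IsMAtom (M : Submonoid G) (a : G) : Prop :=
  a ∈ M ∧ a ≠ 1 ∧ ∀ b ∈ M, ∀ c ∈ M, a = b * c → b = 1 ∨ c = 1

/-- A Garside monoid `M`, realized as a submonoid (positive cone) of its group of
fractions `G`, together with its Garside element `δ`, left gcd and left lcm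
operations (extended to `G`), and the cycling operation `cyc`. -/
structure Garside where
  M : Submonoid G
  δ : G
  gcd : G → G → G
  lcm : G → G → G
  cyc : G → G
  δ_mem : δ ∈ M
  /-- `G` is the group of fractions of `M`. -/
  fractions : ∀ g : G, ∃ a ∈ M, ∃ b ∈ M, g = a⁻¹ * b
  /-- `M` is generated by its atoms. -/
  atoms_generate : Submonoid.closure {a : G | IsMAtom G M a} = M
  /-- Atomicity: bounded factorization lengths into atoms. -/
  atomic_bound : ∀ a ∈ M, ∃ N : ℕ, ∀ L : List G,
      (∀ b ∈ L, IsMAtom G M b) → L.prod = a → L.length ≤ N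
  /-- Left divisors of `δ` coincide with right divisors of `δ`. -/
  divs_eq : {x : G | x ∈ M ∧ x⁻¹ * δ ∈ M} = {x : G | x ∈ M ∧ δ * x⁻¹ ∈ M}
  divs_finite : Set.Finite {x : G | x ∈ M ∧ x⁻¹ * δ ∈ M}
  divs_generate : Submonoid.closure {x : G | x ∈ M ∧ x⁻¹ * δ ∈ M} = M
  gcd_dvd_left : ∀ a b : G, (gcd a b)⁻¹ * a ∈ M
  gcd_dvd_right : ∀ a b : G, (gcd a b)⁻¹ * b ∈ M
  gcd_greatest : ∀ a b x : G, x⁻¹ * a ∈ M → x⁻¹ * b ∈ M → x⁻¹ * gcd a b ∈ M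
  lcm_dvd_left : ∀ a b : G, a⁻¹ * lcm a b ∈ M
  lcm_dvd_right : ∀ a b : G, b⁻¹ * lcm a b ∈ M
  lcm_least : ∀ a b x : G, a⁻¹ * x ∈ M → b⁻¹ * x ∈ M → (lcm a b)⁻¹ * x ∈ M
  /-- Cycling: if `k = inf x` then `cyc x = x ^ (τ⁻ᵏ A₁)` where `A₁ = δ ∧ δ⁻ᵏ x`
  is the first factor of the left normal form of `x` (when `len x = 0` this
  gcd is `1` and `cyc x = x`). -/
  cyc_spec : ∀ (x : G) (k : ℤ),
      ((δ ^ k)⁻¹ * x ∈ M ∧ ∀ j : ℤ, (δ ^ j)⁻¹ * x ∈ M → j ≤ k) →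
      cyc x = (δ ^ k * gcd δ ((δ ^ k)⁻¹ * x) * (δ ^ k)⁻¹)⁻¹ * x *
              (δ ^ k * gcd δ ((δ ^ k)⁻¹ * x) * (δ ^ k)⁻¹)

variable {G}

namespace Garside

variable (S : Garside G)

/-- Left divisibility `a ≼ b`. -/
def dvd (a b : G) : Prop := a⁻¹ * b ∈ S.M

/-- Simple elements: the (left) divisors of `δ` in `M`. -/
def Simple (a : G) : Prop := a ∈ S.M ∧ a⁻¹ * S.δ ∈ S.M

/-- `k` is the infimum of `x`: maximal with `δ^k ≼ x`. -/
def IsInf (x : G) (k : ℤ) : Prop :=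
  (S.δ ^ k)⁻¹ * x ∈ S.M ∧ ∀ j : ℤ, (S.δ ^ j)⁻¹ * x ∈ S.M → j ≤ k

/-- `s` is the supremum of `x`: minimal with `x ≼ δ^s`. -/
def IsSup (x : G) (s : ℤ) : Prop :=
  x⁻¹ * S.δ ^ s ∈ S.M ∧ ∀ j : ℤ, x⁻¹ * S.δ ^ j ∈ S.M → s ≤ j

/-- `y` lies in the super summit set of `x`: `y` is conjugate to `x`, with
maximal infimum and minimal supremum among all conjugates of `x`. -/
def InSS (x y : G) : Prop :=
  IsConj x y ∧
  (∃ k : ℤ, S.IsInf y k ∧ ∀ z : G, IsConj x z → ∀ k' : ℤ, S.IsInf z k' → k' ≤ k) ∧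
  (∃ s : ℤ, S.IsSup y s ∧ ∀ z : G, IsConj x z → ∀ s' : ℤ, S.IsSup z s' → s ≤ s')

/-- `y` lies in the ultra summit set of `x`: it is in the super summit set and
periodic under cycling. -/
def InUS (x y : G) : Prop :=
  S.InSS x y ∧ ∃ n : ℕ, 0 < n ∧ S.cyc^[n] y = y

/-- `τ^k(z) = δ⁻ᵏ z δᵏ`, where `τ : z ↦ δ⁻¹zδ`. -/
def tauPow (k : ℤ) (z : G) : G := (S.δ ^ k)⁻¹ * z * S.δ ^ k

end Garside

/-- The ordered product `A (i+1) * A (i+2) * ⋯ * A r`. -/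
def prodSeg (A : ℕ → G) (i r : ℕ) : G :=
  ((List.range (r - i)).map (fun j => A (i + 1 + j))).prod

namespace Garside

variable (S : Garside G)

/-- `x` has left normal form `δ^k A₁ ⋯ A_r`: each `Aᵢ` is a nontrivial simple
element and `(Aᵢ⁻¹ δ) ∧ A_{i+1} = 1`. -/
def IsNormalForm (x : G) (k : ℤ) (r : ℕ) (A : ℕ → G) : Prop :=
  x = S.δ ^ k * prodSeg A 0 r ∧
  (∀ i, 1 ≤ i → i ≤ r → S.Simple (A i) ∧ A i ≠ 1) ∧
  (∀ i, 1 ≤ i → i < r → S.gcd ((A i)⁻¹ * S.δ) (A (i + 1)) = 1)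

/-- The sequence `u₀, …, u_r` of the transport construction for `(x, u)`,
where `x` has normal form `δ^k A₁ ⋯ A_r`:
`u₀ = τᵏ(u)`, `u_r = u`, and `uᵢ = (A_{i+1} ⋯ A_r u) ∧ δ·τ(Aᵢ⁻¹ u_{i-1})`. -/
def IsTransportSeq (k : ℤ) (r : ℕ) (A : ℕ → G) (u : G) (useq : ℕ → G) : Prop :=
  useq 0 = S.tauPow k u ∧ useq r = u ∧
  ∀ i, 1 ≤ i → i ≤ r →
    useq i = S.gcd (prodSeg A i r * u) (S.δ * S.tauPow 1 ((A i)⁻¹ * useq (i - 1)))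

/-- The transport `φ_x(u) = τ⁻ᵏ(u₁) = τ⁻ᵏ(A₁⁻¹ · τᵏ(u) · (δ ∧ δ⁻ᵏ(x^u)))`,
where `k = inf x` and `A₁ = δ ∧ δ⁻ᵏ x`. -/
def transp (k : ℤ) (x u : G) : G :=
  S.δ ^ k *
    ((S.gcd S.δ ((S.δ ^ k)⁻¹ * x))⁻¹ * S.tauPow k u *
      S.gcd S.δ ((S.δ ^ k)⁻¹ * (u⁻¹ * x * u))) * (S.δ ^ k)⁻¹

end Garside
namespace Garside

variable {G : Type*} [Group G] (S : Garside G)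

/-! ### Basic monoid and divisibility lemmas -/

lemma mem_atom_list {g : G} (hg : g ∈ S.M) :
    ∃ l : List G, (∀ b ∈ l, IsMAtom G S.M b) ∧ l.prod = g :=
  Submonoid.exists_list_of_mem_closure (s := {a : G | IsMAtom G S.M a})
    (by rw [S.atoms_generate]; exact hg)

lemma eq_one_of_mem_inv_mem {g : G} (h1 : g ∈ S.M) (h2 : g⁻¹ ∈ S.M) : g = 1 := by
  obtain ⟨l1, hl1, hp1⟩ := S.mem_atom_list h1
  obtain ⟨l2, hl2, hp2⟩ := S.mem_atom_list h2
  obtain ⟨N, hN⟩ := S.atomic_bound 1 (one_mem _)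
  by_contra hne
  have hlen1 : l1 ≠ [] := by
    rintro rfl
    exact hne (by simpa using hp1.symm)
  have hflat : ∀ T : ℕ, ((List.replicate T (l1 ++ l2)).flatten).length ≤ N := by
    intro T
    apply hN
    · intro b hb
      rcases List.mem_flatten.mp hb with ⟨l, hl, hbl⟩
      rcases List.mem_replicate.mp hl with ⟨-, rfl⟩
      rcases List.mem_append.mp hbl with h | h
      · exact hl1 b h
      · exact hl2 b h
    · rw [List.prod_flatten, List.map_replicate, List.prod_replicate,
        List.prod_append, hp1, hp2]
      simp
  have hlen : ((List.replicate (N + 1) (l1 ++ l2)).flatten).length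
      = (N + 1) * (l1 ++ l2).length := by
    rw [List.length_flatten, List.map_replicate, List.sum_replicate, smul_eq_mul]
  have h1' : 1 ≤ (l1 ++ l2).length := by
    have : 0 < l1.length := List.length_pos_iff.mpr hlen1
    simp only [List.length_append]
    omega
  have := hflat (N + 1)
  rw [hlen] at this
  nlinarith

lemma dvd_refl' (a : G) : S.dvd a a := by simp [Garside.dvd, one_mem]

lemma dvd_trans' {a b c : G} (h1 : S.dvd a b) (h2 : S.dvd b c) : S.dvd a c := by
  have := mul_mem h1 h2
  simpa [Garside.dvd, mul_assoc] using this

lemma dvd_antisymm' {a b : G} (h1 : S.dvd a b) (h2 : S.dvd b a) : a = b := by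
  have h2' : (a⁻¹ * b)⁻¹ ∈ S.M := by rw [mul_inv_rev, inv_inv]; exact h2
  have := S.eq_one_of_mem_inv_mem h1 h2'
  have := congrArg (fun w => a * w) this
  simpa [mul_assoc] using this.symm

lemma dvd_mul_left_iff (g : G) {a b : G} : S.dvd (g * a) (g * b) ↔ S.dvd a b := by
  unfold Garside.dvd
  constructor <;> intro h
  · convert h using 1; group
  · convert h using 1; group

lemma dvd_mul_right' {a b : G} (h : S.dvd a b) {c : G} (hc : c ∈ S.M) :
    S.dvd a (b * c) := by
  have := mul_mem h hc
  simpa [Garside.dvd, mul_assoc] using this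

lemma dvd_self_mul {b c : G} (hc : c ∈ S.M) : S.dvd b (b * c) :=
  S.dvd_mul_right' (S.dvd_refl' b) hc

lemma one_dvd_iff {a : G} : S.dvd 1 a ↔ a ∈ S.M := by simp [Garside.dvd]

/-! ### gcd lemmas -/

lemma gcd_dvd_left' (a b : G) : S.dvd (S.gcd a b) a := S.gcd_dvd_left a b

lemma gcd_dvd_right' (a b : G) : S.dvd (S.gcd a b) b := S.gcd_dvd_right a b

lemma dvd_gcd' {a b x : G} (h1 : S.dvd x a) (h2 : S.dvd x b) : S.dvd x (S.gcd a b) :=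
  S.gcd_greatest a b x h1 h2

lemma dvd_gcd_iff {x a b : G} : S.dvd x (S.gcd a b) ↔ S.dvd x a ∧ S.dvd x b :=
  ⟨fun h => ⟨S.dvd_trans' h (S.gcd_dvd_left' a b), S.dvd_trans' h (S.gcd_dvd_right' a b)⟩,
   fun ⟨h1, h2⟩ => S.dvd_gcd' h1 h2⟩

lemma gcd_congr {a b c d : G}
    (h : ∀ x : G, (S.dvd x a ∧ S.dvd x b) ↔ (S.dvd x c ∧ S.dvd x d)) :
    S.gcd a b = S.gcd c d := by
  apply S.dvd_antisymm'
  · exact S.dvd_gcd_iff.mpr ((h _).mp ⟨S.gcd_dvd_left' a b, S.gcd_dvd_right' a b⟩)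
  · exact S.dvd_gcd_iff.mpr ((h _).mpr ⟨S.gcd_dvd_left' c d, S.gcd_dvd_right' c d⟩)

lemma gcd_mul_left' (g a b : G) : S.gcd (g * a) (g * b) = g * S.gcd a b := by
  apply S.dvd_antisymm'
  · have h1 : S.dvd (g⁻¹ * S.gcd (g * a) (g * b)) a := by
      rw [← S.dvd_mul_left_iff g]
      simpa [mul_assoc] using S.gcd_dvd_left' (g * a) (g * b)
    have h2 : S.dvd (g⁻¹ * S.gcd (g * a) (g * b)) b := by
      rw [← S.dvd_mul_left_iff g]
      simpa [mul_assoc] using S.gcd_dvd_right' (g * a) (g * b)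
    have := (S.dvd_mul_left_iff g).mpr (S.dvd_gcd' h1 h2)
    simpa [mul_assoc] using this
  · exact S.dvd_gcd_iff.mpr
      ⟨(S.dvd_mul_left_iff g).mpr (S.gcd_dvd_left' a b),
       (S.dvd_mul_left_iff g).mpr (S.gcd_dvd_right' a b)⟩

end Garside
namespace Garside

variable {G : Type*} [Group G] (S : Garside G)

/-! ### Conjugation by powers of δ -/

/-- Conjugation `z ↦ δʲ z δ⁻ʲ` (this is `τ⁻ʲ`). -/
def tconj (j : ℤ) (z : G) : G := S.δ ^ j * z * (S.δ ^ j)⁻¹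

lemma tconj_mul (j : ℤ) (a b : G) : S.tconj j (a * b) = S.tconj j a * S.tconj j b := by
  unfold tconj; group

lemma tconj_one (j : ℤ) : S.tconj j (1 : G) = 1 := by unfold tconj; group

lemma tconj_inv (j : ℤ) (a : G) : S.tconj j a⁻¹ = (S.tconj j a)⁻¹ := by
  unfold tconj; group

lemma tconj_tconj (i j : ℤ) (z : G) : S.tconj i (S.tconj j z) = S.tconj (i + j) z := by
  unfold tconj
  rw [zpow_add]
  group

lemma tconj_zero (z : G) : S.tconj 0 z = z := by unfold tconj; group

lemma tconj_neg_tconj (j : ℤ) (z : G) : S.tconj (-j) (S.tconj j z) = z := by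
  rw [tconj_tconj, neg_add_cancel, tconj_zero]

lemma tconj_delta (j : ℤ) : S.tconj j S.δ = S.δ := by
  have h : S.δ ^ j * S.δ = S.δ * S.δ ^ j := ((Commute.refl S.δ).zpow_right j).symm
  unfold tconj
  rw [h, mul_assoc, mul_inv_cancel, mul_one]

lemma tconj_zpow_delta (j t : ℤ) : S.tconj j (S.δ ^ t) = S.δ ^ t := by
  unfold tconj
  rw [← zpow_add, add_comm, zpow_add]
  group

lemma tau_inv_mem {g : G} (hg : g ∈ S.M) : S.δ * g * S.δ⁻¹ ∈ S.M := by
  have hg' : g ∈ Submonoid.closure {x : G | x ∈ S.M ∧ x⁻¹ * S.δ ∈ S.M} := by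
    rw [S.divs_generate]; exact hg
  clear hg
  induction hg' using Submonoid.closure_induction with
  | mem x hx =>
    have hx' : x ∈ {y : G | y ∈ S.M ∧ S.δ * y⁻¹ ∈ S.M} := by
      rw [← S.divs_eq]; exact hx
    have hF1 : (S.δ * x⁻¹) ∈ {y : G | y ∈ S.M ∧ y⁻¹ * S.δ ∈ S.M} := by
      refine ⟨hx'.2, ?_⟩
      simpa [mul_assoc] using hx.1
    have hF2 : (S.δ * x⁻¹) ∈ {y : G | y ∈ S.M ∧ S.δ * y⁻¹ ∈ S.M} := by
      rw [← S.divs_eq]; exact hF1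
    have := hF2.2
    simpa [mul_assoc, mul_inv_rev] using this
  | one => simpa using one_mem S.M
  | mul a b ha hb iha ihb =>
    have := mul_mem iha ihb
    have e : S.δ * a * S.δ⁻¹ * (S.δ * b * S.δ⁻¹) = S.δ * (a * b) * S.δ⁻¹ := by group
    rwa [e] at this

lemma tau_mem {g : G} (hg : g ∈ S.M) : S.δ⁻¹ * g * S.δ ∈ S.M := by
  have hg' : g ∈ Submonoid.closure {x : G | x ∈ S.M ∧ x⁻¹ * S.δ ∈ S.M} := by
    rw [S.divs_generate]; exact hg
  clear hg
  induction hg' using Submonoid.closure_induction with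
  | mem x hx =>
    have hC : (x⁻¹ * S.δ) ∈ {y : G | y ∈ S.M ∧ S.δ * y⁻¹ ∈ S.M} := by
      refine ⟨hx.2, ?_⟩
      simpa [mul_assoc] using hx.1
    rw [← S.divs_eq] at hC
    have := hC.2
    simpa [mul_assoc] using this
  | one => simpa using one_mem S.M
  | mul a b ha hb iha ihb =>
    have := mul_mem iha ihb
    have e : S.δ⁻¹ * a * S.δ * (S.δ⁻¹ * b * S.δ) = S.δ⁻¹ * (a * b) * S.δ := by group
    rwa [e] at this

lemma tconj_mem (j : ℤ) : ∀ g ∈ S.M, S.tconj j g ∈ S.M := by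
  induction j using Int.induction_on with
  | zero => intro g hg; rw [tconj_zero]; exact hg
  | succ i ih =>
    intro g hg
    have e : S.tconj (i + 1) g = S.tconj i (S.δ * g * S.δ⁻¹) := by
      unfold tconj
      rw [zpow_add_one]
      group
    rw [e]
    exact ih _ (S.tau_inv_mem hg)
  | pred i ih =>
    intro g hg
    have e : S.tconj (-i - 1) g = S.tconj (-i) (S.δ⁻¹ * g * S.δ) := by
      unfold tconj
      rw [zpow_sub_one]
      group
    rw [e]
    exact ih _ (S.tau_mem hg)

lemma tconj_dvd_iff (j : ℤ) {a b : G} : S.dvd (S.tconj j a) (S.tconj j b) ↔ S.dvd a b := by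
  have e : (S.tconj j a)⁻¹ * S.tconj j b = S.tconj j (a⁻¹ * b) := by
    unfold tconj; group
  constructor
  · intro h
    have h' : S.tconj j (a⁻¹ * b) ∈ S.M := by rwa [← e]
    have := S.tconj_mem (-j) _ h'
    rwa [tconj_neg_tconj] at this
  · intro h
    show (S.tconj j a)⁻¹ * S.tconj j b ∈ S.M
    rw [e]
    exact S.tconj_mem j _ h

lemma tconj_gcd (j : ℤ) (a b : G) :
    S.gcd (S.tconj j a) (S.tconj j b) = S.tconj j (S.gcd a b) := by
  apply S.dvd_antisymm'
  · have h1 : S.dvd (S.tconj (-j) (S.gcd (S.tconj j a) (S.tconj j b))) (S.gcd a b) := by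
      apply S.dvd_gcd'
      · have := S.gcd_dvd_left' (S.tconj j a) (S.tconj j b)
        have := (S.tconj_dvd_iff (-j)).mpr this
        rwa [tconj_neg_tconj] at this
      · have := S.gcd_dvd_right' (S.tconj j a) (S.tconj j b)
        have := (S.tconj_dvd_iff (-j)).mpr this
        rwa [tconj_neg_tconj] at this
    have := (S.tconj_dvd_iff j).mpr h1
    rwa [show S.tconj j (S.tconj (-j) (S.gcd (S.tconj j a) (S.tconj j b)))
        = S.gcd (S.tconj j a) (S.tconj j b) from by
      rw [tconj_tconj, add_neg_cancel, tconj_zero]] at this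
  · apply S.dvd_gcd'
    · exact (S.tconj_dvd_iff j).mpr (S.gcd_dvd_left' a b)
    · exact (S.tconj_dvd_iff j).mpr (S.gcd_dvd_right' a b)

/-! ### δ-powers -/

lemma delta_zpow_mem {t : ℤ} (ht : 0 ≤ t) : S.δ ^ t ∈ S.M := by
  obtain ⟨n, rfl⟩ := Int.eq_ofNat_of_zero_le ht
  rw [zpow_natCast]
  exact pow_mem S.δ_mem n

lemma delta_zpow_dvd {i j : ℤ} (h : i ≤ j) : S.dvd (S.δ ^ i) (S.δ ^ j) := by
  show (S.δ ^ i)⁻¹ * S.δ ^ j ∈ S.M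
  rw [← zpow_neg, ← zpow_add]
  exact S.delta_zpow_mem (by omega)

lemma mem_dvd_delta_pow {g : G} (hg : g ∈ S.M) : ∃ n : ℕ, S.dvd g (S.δ ^ (n : ℤ)) := by
  have hg' : g ∈ Submonoid.closure {x : G | x ∈ S.M ∧ x⁻¹ * S.δ ∈ S.M} := by
    rw [S.divs_generate]; exact hg
  clear hg
  induction hg' using Submonoid.closure_induction with
  | mem x hx => exact ⟨1, by simpa [Garside.dvd] using hx.2⟩
  | one => exact ⟨0, by simp [Garside.dvd, one_mem]⟩
  | mul a b ha hb iha ihb =>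
    obtain ⟨m, hm⟩ := iha
    obtain ⟨n, hn⟩ := ihb
    refine ⟨m + n, ?_⟩
    show (a * b)⁻¹ * S.δ ^ ((m + n : ℕ) : ℤ) ∈ S.M
    have e : (a * b)⁻¹ * S.δ ^ ((m + n : ℕ) : ℤ)
        = (b⁻¹ * S.δ ^ (n : ℤ)) * S.tconj (-(n : ℤ)) (a⁻¹ * S.δ ^ (m : ℤ)) := by
      unfold tconj
      push_cast
      rw [zpow_add]
      group
    rw [e]
    exact mul_mem hn (S.tconj_mem _ _ hm)

lemma dvd_any_delta_pow (g : G) : ∃ t : ℤ, S.dvd g (S.δ ^ t) := by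
  obtain ⟨a, ha, b, hb, rfl⟩ := S.fractions g
  obtain ⟨n, hn⟩ := S.mem_dvd_delta_pow hb
  refine ⟨(n : ℤ), ?_⟩
  show (a⁻¹ * b)⁻¹ * S.δ ^ (n : ℤ) ∈ S.M
  have e : (a⁻¹ * b)⁻¹ * S.δ ^ (n : ℤ)
      = (b⁻¹ * S.δ ^ (n : ℤ)) * S.tconj (-(n : ℤ)) a := by
    unfold tconj; group
  rw [e]
  exact mul_mem hn (S.tconj_mem _ _ ha)

/-! ### infimum lemmas -/

lemma delta_zpow_dvd_le (hnd : ∃ x k, S.IsInf x k) {i j : ℤ}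
    (h : S.dvd (S.δ ^ i) (S.δ ^ j)) : i ≤ j := by
  by_contra hlt
  push_neg at hlt
  obtain ⟨x, k, hx⟩ := hnd
  have hc : (0 : ℤ) < i - j := by omega
  have hmem : S.δ ^ (j - i) ∈ S.M := by
    have : (S.δ ^ i)⁻¹ * S.δ ^ j ∈ S.M := h
    rwa [← zpow_neg, ← zpow_add, add_comm, ← sub_eq_add_neg] at this
  have hinv : (S.δ ^ (j - i))⁻¹ ∈ S.M := by
    rw [← zpow_neg]
    exact S.delta_zpow_mem (by omega)
  have hone : S.δ ^ (j - i) = 1 := S.eq_one_of_mem_inv_mem hmem hinv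
  have habs : (S.δ ^ (k + (i - j)))⁻¹ * x ∈ S.M := by
    have e : (S.δ ^ (k + (i - j)))⁻¹ * x = S.δ ^ (j - i) * ((S.δ ^ k)⁻¹ * x) := by
      group
    rw [e, hone, one_mul]
    exact hx.1
  have := hx.2 _ habs
  omega

lemma isInf_le_isInf {x k k'} (h : S.IsInf x k) (h' : S.IsInf x k') : k ≤ k' :=
  h'.2 _ h.1

lemma exists_isInf (hnd : ∃ x k, S.IsInf x k) {z : G} {j : ℤ}
    (hj : S.dvd (S.δ ^ j) z) : ∃ kz, S.IsInf z kz := by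
  obtain ⟨t, ht⟩ := S.dvd_any_delta_pow z
  have := Int.exists_greatest_of_bdd (P := fun j' => (S.δ ^ j')⁻¹ * z ∈ S.M)
    ⟨t, fun j' hj' => S.delta_zpow_dvd_le hnd (S.dvd_trans' hj' ht)⟩ ⟨j, hj⟩
  obtain ⟨kz, h1, h2⟩ := this
  exact ⟨kz, h1, h2⟩

end Garside
namespace Garside

variable {G : Type*} [Group G] (S : Garside G)

/-! ### The cycling conjugator and transport -/

/-- The conjugating element of the cycling operation: `δᵏ (δ ∧ δ⁻ᵏy) δ⁻ᵏ`. -/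
def wel (k : ℤ) (y : G) : G :=
  S.δ ^ k * S.gcd S.δ ((S.δ ^ k)⁻¹ * y) * (S.δ ^ k)⁻¹

lemma cyc_eq_wel {k : ℤ} {y : G} (h : S.IsInf y k) :
    S.cyc y = (S.wel k y)⁻¹ * y * S.wel k y :=
  S.cyc_spec y k h

lemma wel_eq_tconj (k : ℤ) (y : G) :
    S.wel k y = S.tconj k (S.gcd S.δ ((S.δ ^ k)⁻¹ * y)) := rfl

lemma gcd_head_mem {k : ℤ} {y : G} (h : S.dvd (S.δ ^ k) y) :
    S.gcd S.δ ((S.δ ^ k)⁻¹ * y) ∈ S.M := by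
  have := S.dvd_gcd' (x := 1) (a := S.δ) (b := (S.δ ^ k)⁻¹ * y)
    (by simpa [Garside.dvd] using S.δ_mem) (by simpa [Garside.dvd] using h)
  simpa [Garside.dvd] using this

lemma wel_mem {k : ℤ} {y : G} (h : S.dvd (S.δ ^ k) y) : S.wel k y ∈ S.M := by
  rw [wel_eq_tconj]
  exact S.tconj_mem k _ (S.gcd_head_mem h)

lemma wel_conj_dvd {k : ℤ} {y : G} (h : S.dvd (S.δ ^ k) y) :
    S.dvd (S.δ ^ k) ((S.wel k y)⁻¹ * y * S.wel k y) := by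
  show (S.δ ^ k)⁻¹ * ((S.wel k y)⁻¹ * y * S.wel k y) ∈ S.M
  have e : (S.δ ^ k)⁻¹ * ((S.wel k y)⁻¹ * y * S.wel k y)
      = ((S.gcd S.δ ((S.δ ^ k)⁻¹ * y))⁻¹ * ((S.δ ^ k)⁻¹ * y)) *
        S.tconj k (S.gcd S.δ ((S.δ ^ k)⁻¹ * y)) := by
    unfold wel tconj; group
  rw [e]
  exact mul_mem (S.gcd_dvd_right S.δ _) (S.tconj_mem k _ (S.gcd_head_mem h))

lemma gcd_delta_tconj (j : ℤ) (z : G) :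
    S.gcd S.δ (S.tconj j z) = S.tconj j (S.gcd S.δ z) := by
  conv_lhs => rw [← S.tconj_delta j]
  rw [S.tconj_gcd]

lemma wel_tconj (k j : ℤ) (y : G) :
    S.wel k (S.tconj j y) = S.tconj j (S.wel k y) := by
  unfold wel
  rw [show (S.δ ^ k)⁻¹ * S.tconj j y = S.tconj j ((S.δ ^ k)⁻¹ * y) from by
    unfold tconj; group]
  rw [S.gcd_delta_tconj]
  unfold tconj
  group

/-- Key expansion: `p · w(yᵖ) = τ⁻ᵏ( δ·τᵏ⁺¹(p) ∧ δ⁻ᵏy·p )`. -/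
lemma key_expand (k : ℤ) (y p : G) :
    p * S.wel k (p⁻¹ * y * p)
      = S.tconj k (S.gcd (S.δ * S.tconj (-(k + 1)) p) ((S.δ ^ k)⁻¹ * y * p)) := by
  rw [wel_eq_tconj]
  have e0 : p * S.tconj k (S.gcd S.δ ((S.δ ^ k)⁻¹ * (p⁻¹ * y * p)))
      = S.tconj k (S.tconj (-k) p * S.gcd S.δ ((S.δ ^ k)⁻¹ * (p⁻¹ * y * p))) := by
    rw [S.tconj_mul]
    congr 1
    rw [S.tconj_tconj, add_neg_cancel, S.tconj_zero]
  rw [e0]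
  congr 1
  rw [← S.gcd_mul_left']
  congr 1
  · unfold tconj
    group
  · unfold tconj
    group

lemma transport_expand (k : ℤ) (y p : G) :
    (S.wel k y)⁻¹ * p * S.wel k (p⁻¹ * y * p)
      = S.tconj k ((S.gcd S.δ ((S.δ ^ k)⁻¹ * y))⁻¹ *
          S.gcd (S.δ * S.tconj (-(k + 1)) p) ((S.δ ^ k)⁻¹ * y * p)) := by
  rw [mul_assoc, key_expand, wel_eq_tconj, ← S.tconj_inv, ← S.tconj_mul]

lemma head_dvd_shift (k : ℤ) {y p : G} (hp : p ∈ S.M) :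
    S.dvd (S.gcd S.δ ((S.δ ^ k)⁻¹ * y))
      (S.gcd (S.δ * S.tconj (-(k + 1)) p) ((S.δ ^ k)⁻¹ * y * p)) := by
  apply S.dvd_gcd'
  · exact S.dvd_trans' (S.gcd_dvd_left' _ _) (S.dvd_self_mul (S.tconj_mem _ _ hp))
  · exact S.dvd_mul_right' (S.gcd_dvd_right' _ _) hp

/-- Transport of a positive element is positive. -/
lemma transport_mem (k : ℤ) {y p : G} (hp : p ∈ S.M) :
    (S.wel k y)⁻¹ * p * S.wel k (p⁻¹ * y * p) ∈ S.M := by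
  rw [transport_expand]
  exact S.tconj_mem k _ (S.head_dvd_shift k hp)

/-- Lemma A: transport of a trivial-gcd pair detects the cycling conjugator. -/
lemma gcd_transport (k : ℤ) (y : G) {p q : G} (hpq : S.gcd p q = 1) :
    S.gcd (p * S.wel k (p⁻¹ * y * p)) (q * S.wel k (q⁻¹ * y * q)) = S.wel k y := by
  rw [key_expand, key_expand, S.tconj_gcd]
  rw [show S.gcd (S.gcd (S.δ * S.tconj (-(k + 1)) p) ((S.δ ^ k)⁻¹ * y * p))
        (S.gcd (S.δ * S.tconj (-(k + 1)) q) ((S.δ ^ k)⁻¹ * y * q))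
      = S.gcd (S.gcd (S.δ * S.tconj (-(k + 1)) p) (S.δ * S.tconj (-(k + 1)) q))
        (S.gcd ((S.δ ^ k)⁻¹ * y * p) ((S.δ ^ k)⁻¹ * y * q)) from
    S.gcd_congr fun x => by
      simp only [S.dvd_gcd_iff]
      tauto]
  rw [S.gcd_mul_left', S.gcd_mul_left', S.tconj_gcd, hpq, S.tconj_one]
  simp only [mul_one]
  rw [← wel_eq_tconj]

lemma gcd_conj_transport (k : ℤ) (y : G) {p q : G} (hpq : S.gcd p q = 1) :
    S.gcd ((S.wel k y)⁻¹ * p * S.wel k (p⁻¹ * y * p))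
      ((S.wel k y)⁻¹ * q * S.wel k (q⁻¹ * y * q)) = 1 := by
  have h1 : (S.wel k y)⁻¹ * p * S.wel k (p⁻¹ * y * p)
      = (S.wel k y)⁻¹ * (p * S.wel k (p⁻¹ * y * p)) := by group
  have h2 : (S.wel k y)⁻¹ * q * S.wel k (q⁻¹ * y * q)
      = (S.wel k y)⁻¹ * (q * S.wel k (q⁻¹ * y * q)) := by group
  rw [h1, h2, S.gcd_mul_left', S.gcd_transport k y hpq, inv_mul_cancel]

/-- Transport preserves the bound `≼ δᵗ`. -/
lemma transport_dvd_pow (k : ℤ) {t : ℤ} {y p : G} (hp : p ∈ S.M)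
    (hpt : S.dvd p (S.δ ^ t)) :
    S.dvd ((S.wel k y)⁻¹ * p * S.wel k (p⁻¹ * y * p)) (S.δ ^ t) := by
  set r : G := p⁻¹ * S.δ ^ t with hr
  have hrM : r ∈ S.M := hpt
  have hY := S.transport_mem k (y := p⁻¹ * y * p) hrM
  have e1 : r⁻¹ * (p⁻¹ * y * p) * r = S.tconj (-t) y := by
    rw [hr]; unfold tconj; group
  rw [e1, wel_tconj] at hY
  show ((S.wel k y)⁻¹ * p * S.wel k (p⁻¹ * y * p))⁻¹ * S.δ ^ t ∈ S.M
  have e2 : ((S.wel k y)⁻¹ * p * S.wel k (p⁻¹ * y * p))⁻¹ * S.δ ^ t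
      = (S.wel k (p⁻¹ * y * p))⁻¹ * r * S.tconj (-t) (S.wel k y) := by
    rw [hr]; unfold tconj; group
  rw [e2]
  exact hY

end Garside
namespace Garside

variable {G : Type*} [Group G] (S : Garside G)

/-! ### Finiteness of the set of divisors of δᵗ -/

lemma prod_simple_of_atom : ∀ l : List G,
    (∀ s ∈ l, s ∈ S.M ∧ s⁻¹ * S.δ ∈ S.M) →
    IsMAtom G S.M l.prod → l.prod ∈ S.M ∧ (l.prod)⁻¹ * S.δ ∈ S.M := by
  intro l
  induction l with
  | nil =>
    intro _ ha
    exact absurd List.prod_nil ha.2.1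
  | cons s r ih =>
    intro hmem ha
    have hs := hmem s List.mem_cons_self
    have hrM : r.prod ∈ S.M :=
      Submonoid.list_prod_mem _ (fun x hx => (hmem x (List.mem_cons_of_mem s hx)).1)
    rcases ha.2.2 s hs.1 r.prod hrM (List.prod_cons) with h1 | h2
    · have e : (s :: r).prod = r.prod := by rw [List.prod_cons, h1, one_mul]
      rw [e] at ha ⊢
      exact ih (fun x hx => hmem x (List.mem_cons_of_mem s hx)) ha
    · have e : (s :: r).prod = s := by rw [List.prod_cons, h2, mul_one]
      rw [e]
      exact hs

lemma atom_simple {a : G} (ha : IsMAtom G S.M a) : a ∈ S.M ∧ a⁻¹ * S.δ ∈ S.M := by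
  obtain ⟨l, hl, hp⟩ := Submonoid.exists_list_of_mem_closure
    (s := {x : G | x ∈ S.M ∧ x⁻¹ * S.δ ∈ S.M}) (by rw [S.divs_generate]; exact ha.1)
  rw [← hp]
  exact S.prod_simple_of_atom l hl (hp ▸ ha)

lemma atoms_finite : Set.Finite {a : G | IsMAtom G S.M a} :=
  S.divs_finite.subset (fun _ ha => S.atom_simple ha)

lemma finite_bounded_prods {s : Set G} (hs : s.Finite) (N : ℕ) :
    Set.Finite {g : G | ∃ l : List G, (∀ b ∈ l, b ∈ s) ∧ l.length ≤ N ∧ l.prod = g} := by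
  induction N with
  | zero =>
    apply Set.Finite.subset (Set.finite_singleton (1 : G))
    rintro g ⟨l, -, hlen, rfl⟩
    have : l = [] := List.length_eq_zero_iff.mp (Nat.le_zero.mp hlen)
    simp [this]
  | succ N hN =>
    apply Set.Finite.subset
      (hN.union (Set.Finite.biUnion hs (fun a _ => hN.image (fun g => a * g))))
    rintro g ⟨l, hmem, hlen, rfl⟩
    cases l with
    | nil =>
      left
      exact ⟨[], by simp, by simp, rfl⟩
    | cons a l' =>
      right
      apply Set.mem_biUnion (hmem a List.mem_cons_self)
      refine ⟨l'.prod, ⟨l', fun b hb => hmem b (List.mem_cons_of_mem a hb), ?_, rfl⟩, ?_⟩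
      · have : l'.length + 1 ≤ N + 1 := by simpa using hlen
        omega
      · simp [List.prod_cons]

lemma divisors_finite (t : ℕ) :
    Set.Finite {g : G | g ∈ S.M ∧ S.dvd g (S.δ ^ (t : ℤ))} := by
  have hdm : S.δ ^ ((t : ℕ) : ℤ) ∈ S.M := by
    rw [zpow_natCast]; exact pow_mem S.δ_mem t
  obtain ⟨N, hN⟩ := S.atomic_bound _ hdm
  apply Set.Finite.subset (finite_bounded_prods S.atoms_finite N)
  rintro g ⟨hg, hgd⟩
  obtain ⟨l1, hl1, hp1⟩ := S.mem_atom_list hg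
  obtain ⟨l2, hl2, hp2⟩ := S.mem_atom_list hgd
  have hprod : (l1 ++ l2).prod = S.δ ^ ((t : ℕ) : ℤ) := by
    rw [List.prod_append, hp1, hp2]
    group
  have hlen := hN (l1 ++ l2)
    (fun b hb => (List.mem_append.mp hb).elim (hl1 b) (hl2 b)) hprod
  refine ⟨l1, hl1, ?_, hp1⟩
  have : l1.length ≤ (l1 ++ l2).length := by simp [List.length_append]
  omega

end Garside
namespace Garside

variable {G : Type*} [Group G]

/-- The iterated-transport sequence along the cycling trajectories of `x0`
(the base point) and `xc` (the conjugated point). -/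
def seqC (S : Garside G) (k : ℤ) (x0 xc p : G) : ℕ → G
  | 0 => p
  | i + 1 => (S.wel k (S.cyc^[i] x0))⁻¹ * seqC S k x0 xc p i * S.wel k (S.cyc^[i] xc)

variable (S : Garside G)

lemma seqC_zero (k : ℤ) (x0 xc p : G) : S.seqC k x0 xc p 0 = p := rfl

lemma seqC_succ (k : ℤ) (x0 xc p : G) (i : ℕ) :
    S.seqC k x0 xc p (i + 1)
      = (S.wel k (S.cyc^[i] x0))⁻¹ * S.seqC k x0 xc p i * S.wel k (S.cyc^[i] xc) := rfl

end Garside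
/-- If `x ∈ S_x` has nonzero canonical length, `u ∧ v = 1`, and both `x^u` and
`x^v` lie in the ultra summit set `U_x`, then `x ∈ U_x`. -/
theorem mem_US_of_trivial_gcd {G : Type*} [Group G] (S : Garside G)
    (x u v : G)
    (hx : S.InSS x x)
    (hlen : ∃ k s : ℤ, S.IsInf x k ∧ S.IsSup x s ∧ k < s)
    (hu : u ∈ S.M) (hv : v ∈ S.M) (hgcd : S.gcd u v = 1)
    (hxu : S.InUS x (u⁻¹ * x * u)) (hxv : S.InUS x (v⁻¹ * x * v)) :
    S.InUS x x := by
  classical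
  obtain ⟨k, hk, hkmax⟩ := hx.2.1
  have hnd : ∃ x' k', S.IsInf x' k' := ⟨x, k, hk⟩
  set xu := u⁻¹ * x * u with hxu_def
  set xv := v⁻¹ * x * v with hxv_def
  -- the conjugates have the same infimum k
  have hconj_u : IsConj x xu := isConj_iff.mpr ⟨u⁻¹, by rw [hxu_def]; group⟩
  have hconj_v : IsConj x xv := isConj_iff.mpr ⟨v⁻¹, by rw [hxv_def]; group⟩
  have hku : S.IsInf xu k := by
    obtain ⟨ku, hku, hkumax⟩ := hxu.1.2.1
    have h1 : ku ≤ k := hkmax _ hxu.1.1 _ hku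
    have h2 : k ≤ ku := hkumax x (IsConj.refl x) k hk
    have : ku = k := le_antisymm h1 h2
    exact this ▸ hku
  have hkv : S.IsInf xv k := by
    obtain ⟨kv, hkv, hkvmax⟩ := hxv.1.2.1
    have h1 : kv ≤ k := hkmax _ hxv.1.1 _ hkv
    have h2 : k ≤ kv := hkvmax x (IsConj.refl x) k hk
    have : kv = k := le_antisymm h1 h2
    exact this ▸ hkv
  -- periodicity
  obtain ⟨nu, hnu0, hnuP⟩ := hxu.2
  obtain ⟨nv, hnv0, hnvP⟩ := hxv.2
  set P := nu * nv with hPdef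
  have hP0 : 0 < P := Nat.mul_pos hnu0 hnv0
  have hzP : S.cyc^[P] xu = xu := by
    rw [hPdef, Function.iterate_mul]
    exact Function.iterate_fixed hnuP nv
  have htP : S.cyc^[P] xv = xv := by
    rw [hPdef, Nat.mul_comm, Function.iterate_mul]
    exact Function.iterate_fixed hnvP nu
  have hzper : ∀ q m, S.cyc^[m + q * P] xu = S.cyc^[m] xu := by
    intro q
    induction q with
    | zero => intro m; simp
    | succ q ih =>
      intro m
      have e : m + (q + 1) * P = (m + q * P) + P := by ring
      rw [e, Function.iterate_add_apply, hzP, ih]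
  have htper : ∀ q m, S.cyc^[m + q * P] xv = S.cyc^[m] xv := by
    intro q
    induction q with
    | zero => intro m; simp
    | succ q ih =>
      intro m
      have e : m + (q + 1) * P = (m + q * P) + P := by ring
      rw [e, Function.iterate_add_apply, htP, ih]
  -- bound
  obtain ⟨n1, hn1⟩ := S.mem_dvd_delta_pow hu
  obtain ⟨n2, hn2⟩ := S.mem_dvd_delta_pow hv
  set t : ℕ := max n1 n2 with htdef
  have hut : S.dvd u (S.δ ^ (t : ℤ)) :=
    S.dvd_trans' hn1 (S.delta_zpow_dvd (by exact_mod_cast le_max_left n1 n2))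
  have hvt : S.dvd v (S.δ ^ (t : ℤ)) :=
    S.dvd_trans' hn2 (S.delta_zpow_dvd (by exact_mod_cast le_max_right n1 n2))
  -- the sequences
  set A : ℕ → G := S.seqC k x xu u with hAdef
  set B : ℕ → G := S.seqC k x xv v with hBdef
  -- the single cycling step preserves infimum k and conjugacy
  have step : ∀ g : G, IsConj x g → S.IsInf g k →
      S.IsInf ((S.wel k g)⁻¹ * g * S.wel k g) k ∧
        IsConj x ((S.wel k g)⁻¹ * g * S.wel k g) := by
    intro g hcg hgk
    have hdvd := S.wel_conj_dvd (k := k) (y := g) hgk.1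
    have hconj2 : IsConj x ((S.wel k g)⁻¹ * g * S.wel k g) :=
      hcg.trans (isConj_iff.mpr ⟨(S.wel k g)⁻¹, by group⟩)
    obtain ⟨kz, hkz⟩ := S.exists_isInf hnd hdvd
    have h1 : kz ≤ k := hkmax _ hconj2 _ hkz
    have h2 : k ≤ kz := hkz.2 k hdvd
    have : kz = k := le_antisymm h1 h2
    exact ⟨this ▸ hkz, hconj2⟩
  -- the big invariant
  have inv : ∀ i : ℕ,
      S.IsInf (S.cyc^[i] x) k ∧ S.IsInf (S.cyc^[i] xu) k ∧ S.IsInf (S.cyc^[i] xv) k ∧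
      IsConj x (S.cyc^[i] x) ∧ IsConj x (S.cyc^[i] xu) ∧ IsConj x (S.cyc^[i] xv) ∧
      (A i)⁻¹ * (S.cyc^[i] x) * A i = S.cyc^[i] xu ∧
      (B i)⁻¹ * (S.cyc^[i] x) * B i = S.cyc^[i] xv ∧
      A i ∈ S.M ∧ B i ∈ S.M ∧
      S.dvd (A i) (S.δ ^ (t : ℤ)) ∧ S.dvd (B i) (S.δ ^ (t : ℤ)) ∧
      S.gcd (A i) (B i) = 1 := by
    intro i
    induction i with
    | zero =>
      simp only [Function.iterate_zero_apply]
      have hA0 : A 0 = u := rfl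
      have hB0 : B 0 = v := rfl
      rw [hA0, hB0]
      exact ⟨hk, hku, hkv, IsConj.refl x, hconj_u, hconj_v, rfl, rfl,
        hu, hv, hut, hvt, hgcd⟩
    | succ i ih =>
      obtain ⟨hyk, hzk, htk, hyc, hzc, htc, hay, hby, haM, hbM, haD, hbD, hab⟩ := ih
      have hy1 : S.cyc^[i + 1] x
          = (S.wel k (S.cyc^[i] x))⁻¹ * (S.cyc^[i] x) * S.wel k (S.cyc^[i] x) := by
        rw [Function.iterate_succ_apply', S.cyc_eq_wel hyk]
      have hz1 : S.cyc^[i + 1] xu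
          = (S.wel k (S.cyc^[i] xu))⁻¹ * (S.cyc^[i] xu) * S.wel k (S.cyc^[i] xu) := by
        rw [Function.iterate_succ_apply', S.cyc_eq_wel hzk]
      have ht1 : S.cyc^[i + 1] xv
          = (S.wel k (S.cyc^[i] xv))⁻¹ * (S.cyc^[i] xv) * S.wel k (S.cyc^[i] xv) := by
        rw [Function.iterate_succ_apply', S.cyc_eq_wel htk]
      have hA1 : A (i + 1) = (S.wel k (S.cyc^[i] x))⁻¹ * A i * S.wel k (S.cyc^[i] xu) := rfl
      have hB1 : B (i + 1) = (S.wel k (S.cyc^[i] x))⁻¹ * B i * S.wel k (S.cyc^[i] xv) := rfl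
      refine ⟨?_, ?_, ?_, ?_, ?_, ?_, ?_, ?_, ?_, ?_, ?_, ?_, ?_⟩
      · rw [hy1]; exact (step _ hyc hyk).1
      · rw [hz1]; exact (step _ hzc hzk).1
      · rw [ht1]; exact (step _ htc htk).1
      · rw [hy1]; exact (step _ hyc hyk).2
      · rw [hz1]; exact (step _ hzc hzk).2
      · rw [ht1]; exact (step _ htc htk).2
      · rw [hA1, hy1, hz1, ← hay]; group
      · rw [hB1, hy1, ht1, ← hby]; group
      · rw [hA1, ← hay]; exact S.transport_mem k haM
      · rw [hB1, ← hby]; exact S.transport_mem k hbM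
      · rw [hA1, ← hay]; exact S.transport_dvd_pow k haM haD
      · rw [hB1, ← hby]; exact S.transport_dvd_pow k hbM hbD
      · rw [hA1, hB1, ← hay, ← hby]
        exact S.gcd_conj_transport k _ hab
  -- named projections
  have hAy : ∀ i, (A i)⁻¹ * (S.cyc^[i] x) * A i = S.cyc^[i] xu :=
    fun i => (inv i).2.2.2.2.2.2.1
  have hBy : ∀ i, (B i)⁻¹ * (S.cyc^[i] x) * B i = S.cyc^[i] xv :=
    fun i => (inv i).2.2.2.2.2.2.2.1
  have hAM : ∀ i, A i ∈ S.M := fun i => (inv i).2.2.2.2.2.2.2.2.1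
  have hBM : ∀ i, B i ∈ S.M := fun i => (inv i).2.2.2.2.2.2.2.2.2.1
  have hAD : ∀ i, S.dvd (A i) (S.δ ^ (t : ℤ)) := fun i => (inv i).2.2.2.2.2.2.2.2.2.2.1
  have hBD : ∀ i, S.dvd (B i) (S.δ ^ (t : ℤ)) := fun i => (inv i).2.2.2.2.2.2.2.2.2.2.2.1
  have hABgcd : ∀ i, S.gcd (A i) (B i) = 1 := fun i => (inv i).2.2.2.2.2.2.2.2.2.2.2.2
  -- pigeonhole
  set Dset : Set G := {g : G | g ∈ S.M ∧ S.dvd g (S.δ ^ (t : ℤ))} with hDdef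
  have hDfin : Dset.Finite := S.divisors_finite t
  haveI : Finite ↥Dset := hDfin.to_subtype
  obtain ⟨i, j, hij, hAij, hBij, hmod⟩ :
      ∃ i j : ℕ, i < j ∧ A i = A j ∧ B i = B j ∧ i % P = j % P := by
    set f : ℕ → ↥Dset × ↥Dset × Fin P := fun i =>
      (⟨A i, hAM i, hAD i⟩, ⟨B i, hBM i, hBD i⟩, ⟨i % P, Nat.mod_lt i hP0⟩) with hfdef
    obtain ⟨i, j, hne, hfeq⟩ := Finite.exists_ne_map_eq_of_infinite f
    have h1 : A i = A j := congrArg (fun p => (p.1 : G)) hfeq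
    have h2 : B i = B j := congrArg (fun p => (p.2.1 : G)) hfeq
    have h3 : i % P = j % P := congrArg (fun p => (p.2.2 : Fin P).val) hfeq
    rcases hne.lt_or_gt with h | h
    · exact ⟨i, j, h, h1, h2, h3⟩
    · exact ⟨j, i, h, h1.symm, h2.symm, h3.symm⟩
  obtain ⟨q, hq⟩ : P ∣ j - i := (Nat.modEq_iff_dvd' hij.le).mp hmod
  -- backwards propagation of equality
  have back : ∀ r : ℕ, r ≤ i → A (i - r) = A (j - r) ∧ B (i - r) = B (j - r) := by
    intro r
    induction r with
    | zero => intro _; simpa using ⟨hAij, hBij⟩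
    | succ r ih =>
      intro hr
      obtain ⟨hae, hbe⟩ := ih (Nat.le_of_succ_le hr)
      have hi1 : i - r = (i - (r + 1)) + 1 := by omega
      have hj1 : j - r = (j - (r + 1)) + 1 := by omega
      set i₁ := i - (r + 1) with hi₁def
      set j₁ := j - (r + 1) with hj₁def
      have hj₁i₁ : j₁ = i₁ + (j - i) := by omega
      have hzz : S.cyc^[j₁] xu = S.cyc^[i₁] xu := by
        rw [hj₁i₁, hq, Nat.mul_comm P q]
        exact hzper q i₁
      have htt : S.cyc^[j₁] xv = S.cyc^[i₁] xv := by
        rw [hj₁i₁, hq, Nat.mul_comm P q]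
        exact htper q i₁
      have hae' : A (i₁ + 1) = A (j₁ + 1) := by rw [← hi1, ← hj1]; exact hae
      have hbe' : B (i₁ + 1) = B (j₁ + 1) := by rw [← hi1, ← hj1]; exact hbe
      -- the cycling conjugators
      have hCi : S.gcd (A i₁ * S.wel k (S.cyc^[i₁] xu)) (B i₁ * S.wel k (S.cyc^[i₁] xv))
          = S.wel k (S.cyc^[i₁] x) := by
        conv_lhs => rw [← hAy i₁, ← hBy i₁]
        exact S.gcd_transport k _ (hABgcd i₁)
      have hCj : S.gcd (A j₁ * S.wel k (S.cyc^[j₁] xu)) (B j₁ * S.wel k (S.cyc^[j₁] xv))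
          = S.wel k (S.cyc^[j₁] x) := by
        conv_lhs => rw [← hAy j₁, ← hBy j₁]
        exact S.gcd_transport k _ (hABgcd j₁)
      have hAi1 : A (i₁ + 1)
          = (S.wel k (S.cyc^[i₁] x))⁻¹ * A i₁ * S.wel k (S.cyc^[i₁] xu) := rfl
      have hAj1 : A (j₁ + 1)
          = (S.wel k (S.cyc^[j₁] x))⁻¹ * A j₁ * S.wel k (S.cyc^[j₁] xu) := rfl
      have hBi1 : B (i₁ + 1)
          = (S.wel k (S.cyc^[i₁] x))⁻¹ * B i₁ * S.wel k (S.cyc^[i₁] xv) := rfl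
      have hBj1 : B (j₁ + 1)
          = (S.wel k (S.cyc^[j₁] x))⁻¹ * B j₁ * S.wel k (S.cyc^[j₁] xv) := rfl
      set Ci := S.wel k (S.cyc^[i₁] x) with hCidef
      set Cj := S.wel k (S.cyc^[j₁] x) with hCjdef
      set Wz := S.wel k (S.cyc^[i₁] xu) with hWzdef
      set Wt := S.wel k (S.cyc^[i₁] xv) with hWtdef
      have eAi : A i₁ = Ci * A (i₁ + 1) * Wz⁻¹ := by rw [hAi1]; group
      have eAj : A j₁ = Cj * A (j₁ + 1) * Wz⁻¹ := by
        rw [hAj1, hzz, ← hWzdef]; group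
      have eBi : B i₁ = Ci * B (i₁ + 1) * Wt⁻¹ := by rw [hBi1]; group
      have eBj : B j₁ = Cj * B (j₁ + 1) * Wt⁻¹ := by
        rw [hBj1, htt, ← hWtdef]; group
      have h1 : A j₁ = (Cj * Ci⁻¹) * A i₁ := by
        rw [eAj, eAi, ← hae']; group
      have h2 : B j₁ = (Cj * Ci⁻¹) * B i₁ := by
        rw [eBj, eBi, ← hbe']; group
      have hg : Cj * Ci⁻¹ = 1 := by
        have hone := hABgcd j₁
        rw [h1, h2, S.gcd_mul_left', hABgcd i₁, mul_one] at hone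
        exact hone
      constructor
      · show A i₁ = A j₁
        rw [h1, hg, one_mul]
      · show B i₁ = B j₁
        rw [h2, hg, one_mul]
  -- conclusion
  obtain ⟨hAu, hBv⟩ := back i le_rfl
  have hAu' : A 0 = A (j - i) := by simpa using hAu
  set n := j - i with hndef
  have hn0 : 0 < n := by omega
  have hzn : S.cyc^[n] xu = xu := by
    rw [show n = 0 + q * P from hq.trans (by ring), hzper q 0]
    simp
  have h7 := hAy n
  rw [hzn] at h7
  have hAn : A n = u := by rw [← hAu']; rfl
  rw [hAn, hxu_def] at h7
  have hyn : S.cyc^[n] x = x := by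
    have h8 : u⁻¹ * S.cyc^[n] x = u⁻¹ * x := mul_right_cancel h7
    exact mul_left_cancel h8
  exact ⟨hx, n, hn0, hyn⟩

end GarsideFormal
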